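/- Let t ∈ 𝔻[ω] and let k > 0 be a denominator exponent for t (i.e., √2^k·t ∈ ℤ[ω]). Then k is the least denominator exponent for t if and only if √2^k·t is irreducible modulo 2, i.e., there exists no y ∈ ℤ[ω] with √2^k·t ≡ √2·y (mod 2). -/

import Mathlib

/-
Multiplication by `√2` maps `ℤ[ω]` into itself, so the denominator exponents of `t` form an
up-closed subset of `ℕ`, and `k = m + 1` is the least one exactly when `m` is not a denominator
exponent. Since `(√2)² = 2`, the congruence `√2 z ≡ √2 y (mod 2)` says `z - y ∈ √2 ℤ[ω]`; hence
`√2 z` is reducible exactly when `z = √2^m t` itself lies in `ℤ[ω]`.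
-/

noncomputable section

/-- The eighth root of unity `ω = e^{iπ/4} = (1+i)/√2`. -/
def ω : ℂ := (1 + Complex.I) / Real.sqrt 2

/-- A rational number is dyadic if it has the form `a / 2^n` with `a ∈ ℤ`, `n ∈ ℕ`. -/
def IsDyadic (q : ℚ) : Prop := ∃ (a : ℤ) (n : ℕ), q = a / 2 ^ n

/-- Membership in the ring `𝔻[ω] = ℤ[1/√2, i]`: complex numbers of the form
`aω³ + bω² + cω + d` with `a, b, c, d` dyadic rationals. -/
def inDω (t : ℂ) : Prop :=
  ∃ a b c d : ℚ, IsDyadic a ∧ IsDyadic b ∧ IsDyadic c ∧ IsDyadic d ∧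
    t = (a : ℂ) * ω ^ 3 + (b : ℂ) * ω ^ 2 + (c : ℂ) * ω + (d : ℂ)

/-- Membership in the ring `ℤ[ω]`: complex numbers of the form
`aω³ + bω² + cω + d` with `a, b, c, d ∈ ℤ`. -/
def inZω (t : ℂ) : Prop :=
  ∃ a b c d : ℤ, t = (a : ℂ) * ω ^ 3 + (b : ℂ) * ω ^ 2 + (c : ℂ) * ω + (d : ℂ)

lemma sqrt_two_ne_zero : (Real.sqrt 2 : ℂ) ≠ 0 := by
  simp

lemma sqrt_two_sq : (Real.sqrt 2 : ℂ) ^ 2 = 2 := by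
  rw [← Complex.ofReal_pow, Real.sq_sqrt zero_le_two, Complex.ofReal_ofNat]

lemma ω_sq : ω ^ 2 = Complex.I := by
  rw [ω, div_pow, sqrt_two_sq, add_sq, Complex.I_sq]
  ring

lemma ω_pow_four : ω ^ 4 = -1 := by
  rw [show ω ^ 4 = (ω ^ 2) ^ 2 by ring, ω_sq, Complex.I_sq]

lemma sqrt_two_eq_ω_sub_ω_pow_three : (Real.sqrt 2 : ℂ) = ω - ω ^ 3 := by
  have hω : (Real.sqrt 2 : ℂ) * ω = 1 + Complex.I := by rw [ω, mul_div_cancel₀ _ sqrt_two_ne_zero]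
  apply mul_left_cancel₀ sqrt_two_ne_zero
  rw [← sq, sqrt_two_sq, show ω - ω ^ 3 = ω * (1 - ω ^ 2) by ring, ω_sq, ← mul_assoc, hω]
  ring_nf
  rw [Complex.I_sq]
  ring

lemma inZω_add {s t : ℂ} (hs : inZω s) (ht : inZω t) : inZω (s + t) := by
  obtain ⟨a, b, c, d, rfl⟩ := hs
  obtain ⟨a', b', c', d', rfl⟩ := ht
  exact ⟨a + a', b + b', c + c', d + d', by push_cast; ring⟩

lemma inZω_sqrt_two_mul {t : ℂ} (ht : inZω t) : inZω ((Real.sqrt 2 : ℂ) * t) := by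
  obtain ⟨a, b, c, d, rfl⟩ := ht
  refine ⟨b - d, a + c, b + d, c - a, ?_⟩
  rw [sqrt_two_eq_ω_sub_ω_pow_three]
  push_cast
  linear_combination ((a : ℂ) - c - a * ω ^ 2 - b * ω) * ω_pow_four

lemma inZω_sqrt_two_pow_mul {t : ℂ} (ht : inZω t) (n : ℕ) :
    inZω ((Real.sqrt 2 : ℂ) ^ n * t) := by
  induction n with
  | zero => simpa using ht
  | succ n ih => simpa only [pow_succ', mul_assoc] using inZω_sqrt_two_mul ih

lemma isUpperSet_denominatorExponents (t : ℂ) :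
    IsUpperSet {j : ℕ | inZω ((Real.sqrt 2 : ℂ) ^ j * t)} := by
  intro i j hij hi
  obtain ⟨n, rfl⟩ := Nat.exists_eq_add_of_le hij
  simpa only [Set.mem_ofPred_eq, pow_add, mul_comm ((Real.sqrt 2 : ℂ) ^ i), mul_assoc]
    using inZω_sqrt_two_pow_mul hi n

lemma IsUpperSet.isLeast_succ_iff {S : Set ℕ} (hS : IsUpperSet S) {m : ℕ} (hmem : m + 1 ∈ S) :
    IsLeast S (m + 1) ↔ m ∉ S := by
  refine ⟨fun h hm => by simpa using h.2 hm, fun hm => ⟨hmem, fun j hj => ?_⟩⟩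
  by_contra! hlt
  exact hm (hS (Nat.le_of_lt_succ hlt) hj)

lemma reducible_sqrt_two_mul_iff (z : ℂ) :
    (∃ y, inZω y ∧ inZω (((Real.sqrt 2 : ℂ) * z - (Real.sqrt 2 : ℂ) * y) / 2)) ↔ inZω z := by
  constructor
  · rintro ⟨y, hy, hq⟩
    have hz : z = y + Real.sqrt 2 * ((Real.sqrt 2 * z - Real.sqrt 2 * y) / 2) := by
      linear_combination (y - z) / 2 * sqrt_two_sq
    exact hz ▸ inZω_add hy (inZω_sqrt_two_mul hq)
  · intro hz
    refine ⟨z, hz, ?_⟩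
    rw [sub_self, zero_div]
    exact ⟨0, 0, 0, 0, by simp⟩

theorem stmt6_general (t : ℂ) (k : ℕ) (hk : 0 < k)
    (hden : inZω ((Real.sqrt 2 : ℂ) ^ k * t)) :
    IsLeast {j : ℕ | inZω ((Real.sqrt 2 : ℂ) ^ j * t)} k ↔
      ¬ ∃ y, inZω y ∧
        inZω (((Real.sqrt 2 : ℂ) ^ k * t - (Real.sqrt 2 : ℂ) * y) / 2) := by
  obtain ⟨m, rfl⟩ : ∃ m, k = m + 1 := ⟨k - 1, by omega⟩
  rw [(isUpperSet_denominatorExponents t).isLeast_succ_iff hden, pow_succ', mul_assoc,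
    reducible_sqrt_two_mul_iff]
  rfl

/-- For `t ∈ 𝔻[ω]` and a denominator exponent `k > 0` of `t`: `k` is the least denominator
exponent for `t` iff `√2^k t` is irreducible modulo 2, i.e. there is no `y ∈ ℤ[ω]` with
`√2^k t ≡ √2 y (mod 2)`. -/
theorem stmt6 (t : ℂ) (ht : inDω t) (k : ℕ) (hk : 0 < k)
    (hden : inZω ((Real.sqrt 2 : ℂ) ^ k * t)) :
    IsLeast {j : ℕ | inZω ((Real.sqrt 2 : ℂ) ^ j * t)} k ↔
      ¬ ∃ y, inZω y ∧
        inZω (((Real.sqrt 2 : ℂ) ^ k * t - (Real.sqrt 2 : ℂ) * y) / 2) :=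
  stmt6_general t k hk hden

end
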